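/- arXiv:1604.04983 — 8 statements merged into one kernel-verified Lean document; each statement's English description precedes it below -/
import Mathlib

section
/- Let C : X → Y1 → ℝ be a channel, M : X → X → ℝ a channel (markov), and H : X → (Y2 × X) → ℝ an HMM. Then the effective channel of the sequential composition ⟨C|M⟩ ; H equals the parallel composition of C with the matrix product of M and chan H, i.e. for all x ∈ X, y1 ∈ Y1, y2 ∈ Y2: (chan (⟨C|M⟩ ; H)) x (y1,y2) = (C ∥ (M·(chan H))) x (y1,y2), where (M·D) x y = Σ_{x''} M x x'' * D x'' y. -/
open Finset

/-- The effective channel of an HMM: `(chan H) x y = Σ_{x'} H x (y, x')`. -/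
noncomputable def chan {X Y : Type} [Fintype X] (H : X → Y × X → ℝ) : X → Y → ℝ :=
  fun x y => ∑ x', H x (y, x')

/-- The HMM-step `⟨C|M⟩` of a channel `C` and a markov `M`. -/
def step {X Y : Type} (C : X → Y → ℝ) (M : X → X → ℝ) : X → Y × X → ℝ :=
  fun x p => C x p.1 * M x p.2

/-- Sequential composition of HMMs. -/
noncomputable def seqComp {X Y1 Y2 : Type} [Fintype X]
    (H1 : X → Y1 × X → ℝ) (H2 : X → Y2 × X → ℝ) : X → (Y1 × Y2) × X → ℝ :=
  fun x p => ∑ x'', H1 x (p.1.1, x'') * H2 x'' (p.1.2, p.2)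

/-- Parallel composition of channels. -/
def par {X Y1 Y2 : Type} (C1 : X → Y1 → ℝ) (C2 : X → Y2 → ℝ) : X → Y1 × Y2 → ℝ :=
  fun x p => C1 x p.1 * C2 x p.2

/-- Matrix product of a markov with a channel: `(M·D) x y = Σ_{x''} M x x'' * D x'' y`. -/
noncomputable def matProd {X Y : Type} [Fintype X] (M : X → X → ℝ) (D : X → Y → ℝ) :
    X → Y → ℝ :=
  fun x y => ∑ x'', M x x'' * D x'' y

/-- `chan (⟨C|M⟩ ; H) = C ∥ (M · chan H)`. -/
theorem chan_step_seq {X Y1 Y2 : Type} [Fintype X] [Nonempty X]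
    [Fintype Y1] [Nonempty Y1] [Fintype Y2] [Nonempty Y2]
    (C : X → Y1 → ℝ) (M : X → X → ℝ) (H : X → Y2 × X → ℝ)
    (hCpos : ∀ x y, 0 ≤ C x y) (hCsum : ∀ x, ∑ y, C x y = 1)
    (hMpos : ∀ x x', 0 ≤ M x x') (hMsum : ∀ x, ∑ x', M x x' = 1)
    (hHpos : ∀ x p, 0 ≤ H x p) (hHsum : ∀ x, ∑ p : Y2 × X, H x p = 1) :
    ∀ (x : X) (y1 : Y1) (y2 : Y2),
      chan (seqComp (step C M) H) x (y1, y2) = par C (matProd M (chan H)) x (y1, y2) := by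
  intro x y1 y2
  simp only [chan, seqComp, step, par, matProd, Finset.mul_sum, Finset.sum_mul]
  rw [Finset.sum_comm]
  congr 1; ext x''; congr 1; ext x'; ring
end

section
/- Let C : X → Y1 → ℝ be a channel, M : X → X → ℝ a channel (markov), and H : X → (Y2 × X) → ℝ an HMM. Then the Bayes min-capacity of the effective channel of the sequential composition is bounded as follows: ML(chan (⟨C|M⟩ ; H)) ≤ ML(C) + min( ML(M), ML(chan H) ), where the markov M is treated as a channel from X to X in the term ML(M). -/
open Finset

/-- Bayes min-capacity of a channel: `ML(C) = log₂ ( Σ_y max_x C x y )`. -/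
noncomputable def ML {X Y : Type} [Fintype X] [Nonempty X] [Fintype Y]
    (C : X → Y → ℝ) : ℝ :=
  Real.logb 2 (∑ y, Finset.univ.sup' Finset.univ_nonempty (fun x => C x y))

section Aux

variable {X Y : Type} [Fintype X] [Nonempty X] [Fintype Y]

lemma sup'_nonneg_of (C : X → Y → ℝ) (h : ∀ x y, 0 ≤ C x y) (y : Y) :
    0 ≤ Finset.univ.sup' Finset.univ_nonempty (fun x => C x y) := by
  obtain ⟨x⟩ := ‹Nonempty X›
  exact le_trans (h x y) (le_sup' (fun x => C x y) (mem_univ x))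

lemma one_le_sumsup (C : X → Y → ℝ) (h : ∀ x, ∑ y, C x y = 1) :
    1 ≤ ∑ y, Finset.univ.sup' Finset.univ_nonempty (fun x => C x y) := by
  obtain ⟨x⟩ := ‹Nonempty X›
  calc 1 = ∑ y, C x y := (h x).symm
    _ ≤ _ := Finset.sum_le_sum fun y _ => le_sup' (fun x => C x y) (mem_univ x)

end Aux

lemma sum_sup_le_mul {X Y1 Y2 : Type} [Fintype X] [Nonempty X] [Fintype Y1] [Fintype Y2]
    (f : X → Y1 × Y2 → ℝ) (a : Y1 → ℝ) (b : Y2 → ℝ)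
    (hf : ∀ x y1 y2, f x (y1, y2) ≤ a y1 * b y2) :
    ∑ p : Y1 × Y2, Finset.univ.sup' Finset.univ_nonempty (fun x => f x p)
      ≤ (∑ y1, a y1) * (∑ y2, b y2) := by
  rw [Finset.sum_mul_sum, Fintype.sum_prod_type]
  refine Finset.sum_le_sum fun y1 _ => Finset.sum_le_sum fun y2 _ => ?_
  exact Finset.sup'_le _ _ fun x _ => hf x y1 y2

/-- `ML(chan (⟨C|M⟩ ; H)) ≤ ML(C) + min (ML(M)) (ML(chan H))`. -/
theorem ML_chan_step_seq_le {X Y1 Y2 : Type} [Fintype X] [Nonempty X]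
    [Fintype Y1] [Nonempty Y1] [Fintype Y2] [Nonempty Y2]
    (C : X → Y1 → ℝ) (M : X → X → ℝ) (H : X → Y2 × X → ℝ)
    (hCpos : ∀ x y, 0 ≤ C x y) (hCsum : ∀ x, ∑ y, C x y = 1)
    (hMpos : ∀ x x', 0 ≤ M x x') (hMsum : ∀ x, ∑ x', M x x' = 1)
    (hHpos : ∀ x p, 0 ≤ H x p) (hHsum : ∀ x, ∑ p : Y2 × X, H x p = 1) :
    ML (chan (seqComp (step C M) H)) ≤ ML C + min (ML M) (ML (chan H)) := by
  classical
  set f := chan (seqComp (step C M) H) with hf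
  -- notation for the sups
  set a : Y1 → ℝ := fun y1 => Finset.univ.sup' Finset.univ_nonempty (fun x => C x y1) with ha
  set m : X → ℝ := fun x'' => Finset.univ.sup' Finset.univ_nonempty (fun x => M x x'') with hm
  set bH : Y2 → ℝ := fun y2 => Finset.univ.sup' Finset.univ_nonempty (fun x => chan H x y2)
    with hbH
  have ha_nonneg : ∀ y1, 0 ≤ a y1 := fun y1 => sup'_nonneg_of C hCpos y1
  have hm_nonneg : ∀ x'', 0 ≤ m x'' := fun x'' => sup'_nonneg_of M hMpos x''
  have hchanH_sum : ∀ x, ∑ y2, chan H x y2 = 1 := by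
    intro x
    have := hHsum x
    rw [Fintype.sum_prod_type] at this
    simpa [chan] using this
  have hchanH_nonneg : ∀ x y2, 0 ≤ chan H x y2 := fun x y2 =>
    Finset.sum_nonneg fun x' _ => hHpos x (y2, x')
  have hbH_nonneg : ∀ y2, 0 ≤ bH y2 := fun y2 => sup'_nonneg_of (chan H) hchanH_nonneg y2
  -- explicit formula for f
  have hf_eq : ∀ x y1 y2,
      f x (y1, y2) = C x y1 * ∑ x'', M x x'' * chan H x'' y2 := by
    intro x y1 y2
    simp only [hf, chan, seqComp, step, Finset.mul_sum]
    rw [Finset.sum_comm]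
    refine Finset.sum_congr rfl fun x'' _ => ?_
    simp [mul_assoc]
  -- rows of f sum to 1
  have hfrow : ∀ x, ∑ p : Y1 × Y2, f x p = 1 := by
    intro x
    rw [Fintype.sum_prod_type]
    have : ∀ y1, ∑ y2, f x (y1, y2) = C x y1 := by
      intro y1
      simp only [hf_eq]
      rw [← Finset.mul_sum, Finset.sum_comm]
      have : ∑ x'', ∑ y2, M x x'' * chan H x'' y2 = 1 := by
        have : ∀ x'', ∑ y2, M x x'' * chan H x'' y2 = M x x'' := by
          intro x''
          rw [← Finset.mul_sum, hchanH_sum, mul_one]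
        rw [Finset.sum_congr rfl fun x'' _ => this x'', hMsum]
      rw [this, mul_one]
    rw [Finset.sum_congr rfl fun y1 _ => this y1, hCsum]
  -- the three sums
  set S := ∑ p : Y1 × Y2, Finset.univ.sup' Finset.univ_nonempty (fun x => f x p) with hS
  have hS1 : 1 ≤ S := one_le_sumsup f hfrow
  have hA1 : (1:ℝ) ≤ ∑ y1, a y1 := one_le_sumsup C hCsum
  have hM1 : (1:ℝ) ≤ ∑ x'', m x'' := one_le_sumsup M hMsum
  have hH1 : (1:ℝ) ≤ ∑ y2, bH y2 := one_le_sumsup (chan H) hchanH_sum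
  -- bound via H
  have hboundH : S ≤ (∑ y1, a y1) * (∑ y2, bH y2) := by
    refine sum_sup_le_mul f a bH fun x y1 y2 => ?_
    rw [hf_eq]
    have h1 : ∑ x'', M x x'' * chan H x'' y2 ≤ bH y2 := by
      calc ∑ x'', M x x'' * chan H x'' y2
          ≤ ∑ x'', M x x'' * bH y2 := by
            refine Finset.sum_le_sum fun x'' _ => ?_
            exact mul_le_mul_of_nonneg_left (le_sup' (fun x => chan H x y2) (mem_univ x'')) (hMpos x x'')
        _ = bH y2 := by rw [← Finset.sum_mul, hMsum, one_mul]
    have h2 : C x y1 ≤ a y1 := le_sup' (fun x => C x y1) (mem_univ x)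
    calc C x y1 * ∑ x'', M x x'' * chan H x'' y2
        ≤ C x y1 * bH y2 := mul_le_mul_of_nonneg_left h1 (hCpos x y1)
      _ ≤ a y1 * bH y2 := mul_le_mul_of_nonneg_right h2 (hbH_nonneg y2)
  -- bound via M
  set g : Y2 → ℝ := fun y2 => ∑ x'', m x'' * chan H x'' y2 with hg
  have hgsum : ∑ y2, g y2 = ∑ x'', m x'' := by
    simp only [hg]
    rw [Finset.sum_comm]
    refine Finset.sum_congr rfl fun x'' _ => ?_
    rw [← Finset.mul_sum, hchanH_sum, mul_one]
  have hboundM : S ≤ (∑ y1, a y1) * (∑ x'', m x'') := by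
    rw [← hgsum]
    refine sum_sup_le_mul f a g fun x y1 y2 => ?_
    rw [hf_eq]
    have h1 : ∑ x'', M x x'' * chan H x'' y2 ≤ g y2 := by
      refine Finset.sum_le_sum fun x'' _ => ?_
      exact mul_le_mul_of_nonneg_right (le_sup' (fun x => M x x'') (mem_univ x)) (hchanH_nonneg x'' y2)
    have h2 : C x y1 ≤ a y1 := le_sup' (fun x => C x y1) (mem_univ x)
    have hg_nonneg : 0 ≤ g y2 := Finset.sum_nonneg fun x'' _ =>
      mul_nonneg (hm_nonneg x'') (hchanH_nonneg x'' y2)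
    calc C x y1 * ∑ x'', M x x'' * chan H x'' y2
        ≤ C x y1 * g y2 := mul_le_mul_of_nonneg_left h1 (hCpos x y1)
      _ ≤ a y1 * g y2 := mul_le_mul_of_nonneg_right h2 hg_nonneg
  -- conclude via logb
  have key : ∀ (B : ℝ), 1 ≤ B → S ≤ (∑ y1, a y1) * B →
      Real.logb 2 S ≤ Real.logb 2 (∑ y1, a y1) + Real.logb 2 B := by
    intro B hB hSB
    rw [← Real.logb_mul (by linarith) (by linarith)]
    exact Real.logb_le_logb_of_le one_lt_two (by linarith) hSB
  have hfinal1 : ML f ≤ ML C + ML M := key _ hM1 hboundM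
  have hfinal2 : ML f ≤ ML C + ML (chan H) := key _ hH1 hboundH
  rw [← min_add_add_left]
  exact le_min hfinal1 hfinal2
end

section
/- Let C : X → Y → ℝ be a channel, and let Π : Z × X → ℝ be a joint distribution (nonnegative, summing to 1) with Z-marginal ρ (ρ z = Σ_x Π (z,x)) and X-marginal σ (σ x = Σ_z Π (z,x)). Let Ẑ : Z → X → ℝ be a channel with ρ z * Ẑ z x = Π (z,x) for all z,x, and let X̂ : X → Z → ℝ be a channel with σ x * X̂ x z = Π (z,x) for all z,x. For any finite nonempty W and nonnegative gain function g : W → Z → ℝ, define g^Π : W → X → ℝ by g^Π w x = Σ_z X̂ x z * g w z. Then the posterior vulnerabilities agree: V_g[ρ ▷ (Ẑ·C)] = V_{g^Π}[σ ▷ C], where Ẑ·C is the matrix-product (cascade) channel (Ẑ·C) z y = Σ_x Ẑ z x * C x y. -/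
open Finset

/-- Prior g-vulnerability: `V_g(π) = max_w Σ_x π x * g w x`. -/
noncomputable def vul {W X : Type} [Fintype X] [Fintype W] [Nonempty W]
    (g : W → X → ℝ) (π : X → ℝ) : ℝ :=
  Finset.univ.sup' Finset.univ_nonempty (fun w => ∑ x, π x * g w x)

/-- Posterior g-vulnerability: `V_g[π▷C] = Σ_y max_w Σ_x π x * C x y * g w x`. -/
noncomputable def vulPost {W X Y : Type} [Fintype X] [Fintype Y] [Fintype W] [Nonempty W]
    (g : W → X → ℝ) (π : X → ℝ) (C : X → Y → ℝ) : ℝ :=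
  ∑ y, Finset.univ.sup' Finset.univ_nonempty (fun w => ∑ x, π x * C x y * g w x)

/-- Channel cascade: `(Ẑ·C) z y = Σ_x Ẑ z x * C x y`. -/
noncomputable def cascade {Z X Y : Type} [Fintype X]
    (Zc : Z → X → ℝ) (C : X → Y → ℝ) : Z → Y → ℝ :=
  fun z y => ∑ x, Zc z x * C x y

/-- posterior vulnerabilities through the Dalenius cascade agree with
posterior vulnerabilities of the transformed gain function:
`V_g[ρ ▷ (Ẑ·C)] = V_{g^Π}[σ ▷ C]`. -/
theorem vulPost_cascade_eq {Z X Y W : Type}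
    [Fintype Z] [Nonempty Z] [Fintype X] [Nonempty X] [Fintype Y] [Nonempty Y]
    [Fintype W] [Nonempty W]
    (C : X → Y → ℝ) (hCpos : ∀ x y, 0 ≤ C x y) (hCsum : ∀ x, ∑ y, C x y = 1)
    (Pi : Z × X → ℝ) (hPipos : ∀ p, 0 ≤ Pi p) (hPisum : ∑ p : Z × X, Pi p = 1)
    (ρ : Z → ℝ) (hρ : ∀ z, ρ z = ∑ x, Pi (z, x))
    (σ : X → ℝ) (hσ : ∀ x, σ x = ∑ z, Pi (z, x))
    (Zhat : Z → X → ℝ) (hZpos : ∀ z x, 0 ≤ Zhat z x) (hZsum : ∀ z, ∑ x, Zhat z x = 1)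
    (hZfac : ∀ z x, ρ z * Zhat z x = Pi (z, x))
    (Xhat : X → Z → ℝ) (hXpos : ∀ x z, 0 ≤ Xhat x z) (hXsum : ∀ x, ∑ z, Xhat x z = 1)
    (hXfac : ∀ z x, σ x * Xhat x z = Pi (z, x))
    (g : W → Z → ℝ) (hgpos : ∀ w z, 0 ≤ g w z) :
    vulPost g ρ (cascade Zhat C) = vulPost (fun w x => ∑ z, Xhat x z * g w z) σ C := by
  unfold vulPost cascade
  refine Finset.sum_congr rfl fun y _ => ?_
  refine Finset.sup'_congr _ rfl fun w _ => ?_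
  calc ∑ z, ρ z * (∑ x, Zhat z x * C x y) * g w z
      = ∑ z, ∑ x, Pi (z, x) * C x y * g w z := by
        refine Finset.sum_congr rfl fun z _ => ?_
        rw [Finset.mul_sum, Finset.sum_mul]
        refine Finset.sum_congr rfl fun x _ => ?_
        rw [← hZfac z x]; ring
    _ = ∑ x, ∑ z, Pi (z, x) * C x y * g w z := Finset.sum_comm
    _ = ∑ x, σ x * C x y * ∑ z, Xhat x z * g w z := by
        refine Finset.sum_congr rfl fun x _ => ?_
        rw [Finset.mul_sum]
        refine Finset.sum_congr rfl fun z _ => ?_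
        rw [← hXfac z x]; ring
end

section
/- Let H1 : X → (Y1 × X) → ℝ and H2 : X → (Y2 × X) → ℝ be HMMs. Then H1 ⊑ H2 if and only if for every finite nonempty type Z, every joint distribution Π : Z × X → ℝ (nonnegative, summing to 1), every finite nonempty type W, and every nonnegative gain function g : W → ((Z × X) × (Z × X)) → ℝ, the Z-lifted posterior vulnerabilities satisfy Σ_y max_w Σ_{z,x,x'} Π (z,x) * H1 x (y,x') * g w ((z,x),(z,x')) ≥ Σ_y max_w Σ_{z,x,x'} Π (z,x) * H2 x (y,x') * g w ((z,x),(z,x')). -/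
open Finset

/-- Posterior vulnerability of an HMM wrt a gain function on initial–final state pairs:
`V_g[π▷H] = Σ_y max_w Σ_{x,x'} π x * H x (y,x') * g w (x,x')`. -/
noncomputable def vulPostH {W X Y : Type} [Fintype X] [Fintype Y] [Fintype W] [Nonempty W]
    (g : W → X × X → ℝ) (π : X → ℝ) (H : X → Y × X → ℝ) : ℝ :=
  ∑ y, Finset.univ.sup' Finset.univ_nonempty
    (fun w => ∑ x, ∑ x', π x * H x (y, x') * g w (x, x'))

/-- The secure-refinement order on HMMs. -/
def Refines {X Y1 Y2 : Type} [Fintype X] [Fintype Y1] [Fintype Y2]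
    (H1 : X → Y1 × X → ℝ) (H2 : X → Y2 × X → ℝ) : Prop :=
  ∀ (W : Type) [Fintype W] [Nonempty W],
    ∀ g : W → X × X → ℝ, (∀ w p, 0 ≤ g w p) →
      ∀ π : X → ℝ, (∀ x, 0 ≤ π x) → (∑ x, π x = 1) →
        vulPostH g π H1 ≥ vulPostH g π H2

/-- `H1 ⊑ H2` iff for every collateral type `Z`, every joint distribution
`Π : Z × X → ℝ` and every nonnegative gain function on `(Z × X) × (Z × X)`, the
Z-lifted posterior vulnerabilities satisfy the corresponding inequality. -/
theorem refines_iff_collateral {X Y1 Y2 : Type}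
    [Fintype X] [Nonempty X] [Fintype Y1] [Nonempty Y1] [Fintype Y2] [Nonempty Y2]
    (H1 : X → Y1 × X → ℝ) (H2 : X → Y2 × X → ℝ)
    (h1pos : ∀ x p, 0 ≤ H1 x p) (h1sum : ∀ x, ∑ p : Y1 × X, H1 x p = 1)
    (h2pos : ∀ x p, 0 ≤ H2 x p) (h2sum : ∀ x, ∑ p : Y2 × X, H2 x p = 1) :
    Refines H1 H2 ↔
      ∀ (Z : Type) [Fintype Z] [Nonempty Z],
        ∀ Pi : Z × X → ℝ, (∀ p, 0 ≤ Pi p) → (∑ p : Z × X, Pi p = 1) →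
          ∀ (W : Type) [Fintype W] [Nonempty W],
            ∀ g : W → (Z × X) × (Z × X) → ℝ, (∀ w p, 0 ≤ g w p) →
              (∑ y : Y1, Finset.univ.sup' Finset.univ_nonempty
                  (fun w => ∑ z, ∑ x, ∑ x',
                    Pi (z, x) * H1 x (y, x') * g w ((z, x), (z, x')))) ≥
                (∑ y : Y2, Finset.univ.sup' Finset.univ_nonempty
                  (fun w => ∑ z, ∑ x, ∑ x',
                    Pi (z, x) * H2 x (y, x') * g w ((z, x), (z, x')))) := by
  classical
  constructor
  · intro href Z _ _ Pi hPi hPisum W _ _ g hg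
    set π : X → ℝ := fun x => ∑ z, Pi (z, x) with hπ
    have hπpos : ∀ x, 0 ≤ π x := fun x => Finset.sum_nonneg fun z _ => hPi _
    have hπsum : ∑ x, π x = 1 := by
      rw [← hPisum, Fintype.sum_prod_type]; exact Finset.sum_comm
    set g' : W → X × X → ℝ := fun w p =>
      if π p.1 = 0 then 0
      else (∑ z, Pi (z, p.1) * g w ((z, p.1), (z, p.2))) / π p.1 with hg'def
    have hg' : ∀ w p, 0 ≤ g' w p := by
      intro w p
      simp only [hg'def]
      split
      · exact le_refl 0
      · exact div_nonneg (Finset.sum_nonneg fun z _ => mul_nonneg (hPi _) (hg _ _))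
          (hπpos _)
    have key : ∀ (Y : Type) [Fintype Y] (H : X → Y × X → ℝ) (w : W) (y : Y) (x x' : X),
        π x * H x (y, x') * g' w (x, x')
          = ∑ z, Pi (z, x) * H x (y, x') * g w ((z, x), (z, x')) := by
      intro Y _ H w y x x'
      simp only [hg'def]
      by_cases h0 : π x = 0
      · have hz : ∀ z, Pi (z, x) = 0 := by
          intro z
          have := (Finset.sum_eq_zero_iff_of_nonneg (fun z _ => hPi (z, x))).mp h0
          exact this z (Finset.mem_univ z)
        simp [h0, hz]
      · simp only [h0, if_false]
        have hstep : π x * H x (y, x') * ((∑ z, Pi (z, x) * g w ((z, x), (z, x'))) / π x)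
            = H x (y, x') * ∑ z, Pi (z, x) * g w ((z, x), (z, x')) := by
          field_simp
        rw [hstep, Finset.mul_sum]
        exact Finset.sum_congr rfl fun z _ => by ring
    have eqV : ∀ (Y : Type) [Fintype Y] (H : X → Y × X → ℝ),
        vulPostH g' π H
          = ∑ y : Y, Finset.univ.sup' Finset.univ_nonempty
              (fun w => ∑ z, ∑ x, ∑ x',
                Pi (z, x) * H x (y, x') * g w ((z, x), (z, x'))) := by
      intro Y _ H
      unfold vulPostH
      refine Finset.sum_congr rfl fun y _ => ?_
      refine Finset.sup'_congr _ rfl fun w _ => ?_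
      calc ∑ x, ∑ x', π x * H x (y, x') * g' w (x, x')
          = ∑ x, ∑ x', ∑ z, Pi (z, x) * H x (y, x') * g w ((z, x), (z, x')) :=
            Finset.sum_congr rfl fun x _ => Finset.sum_congr rfl fun x' _ =>
              key Y H w y x x'
        _ = ∑ x, ∑ z, ∑ x', Pi (z, x) * H x (y, x') * g w ((z, x), (z, x')) :=
            Finset.sum_congr rfl fun x _ => Finset.sum_comm
        _ = ∑ z, ∑ x, ∑ x', Pi (z, x) * H x (y, x') * g w ((z, x), (z, x')) :=
            Finset.sum_comm
    have := href W g' hg' π hπpos hπsum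
    rw [eqV Y1 H1, eqV Y2 H2] at this
    exact this
  · intro hcol W _ _ g hg π hπ hπsum
    have h := hcol Unit (fun p => π p.2) (fun p => hπ p.2)
      (by rw [Fintype.sum_prod_type]; simpa using hπsum)
      W (fun w p => g w (p.1.2, p.2.2)) (fun w p => hg w _)
    simpa [vulPostH] using h
end

section
/- Sequential composition of HMMs is monotone with respect to secure refinement: if H, H' : X → (Y1 × X) → ℝ and K, K' : X → (Y2 × X) → ℝ are HMMs with H ⊑ H' and K ⊑ K', then H;K ⊑ H';K'. -/
open Finset

lemma sum_sup'_eq_sup'_sum {Y W : Type} [Fintype Y] [DecidableEq Y] [Nonempty Y]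
    [Fintype W] [Nonempty W] (f : Y → W → ℝ) :
    ∑ y, univ.sup' univ_nonempty (f y)
      = univ.sup' univ_nonempty (fun φ : Y → W => ∑ y, f y (φ y)) := by
  apply le_antisymm
  · choose φ hmem hφ using fun y => Finset.exists_mem_eq_sup' (univ_nonempty) (f y)
    calc ∑ y, univ.sup' univ_nonempty (f y) = ∑ y, f y (φ y) := by
          exact Finset.sum_congr rfl fun y _ => hφ y
      _ ≤ _ := Finset.le_sup' (f := fun ψ : Y → W => ∑ y, f y (ψ y)) (mem_univ φ)
  · apply Finset.sup'_le
    intro φ _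
    exact Finset.sum_le_sum fun y _ => Finset.le_sup' (f y) (mem_univ (φ y))

lemma swap_aux {A B C D : Type} [Fintype A] [Fintype B] [Fintype C] [Fintype D]
    (F : A → B → C → D → ℝ) :
    ∑ a, ∑ b, ∑ c, ∑ d, F a b c d = ∑ b, ∑ d, ∑ a, ∑ c, F a b c d := by
  rw [Finset.sum_comm]
  refine Finset.sum_congr rfl fun b _ => ?_
  rw [show (∑ a, ∑ c, ∑ d, F a b c d) = ∑ a, ∑ d, ∑ c, F a b c d from
    Finset.sum_congr rfl fun a _ => Finset.sum_comm]
  exact Finset.sum_comm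

lemma swap3 {A B C : Type} [Fintype A] [Fintype B] [Fintype C]
    (F : A → B → C → ℝ) :
    ∑ a, ∑ b, ∑ c, F a b c = ∑ c, ∑ b, ∑ a, F a b c := by
  rw [show (∑ a, ∑ b, ∑ c, F a b c) = ∑ a, ∑ c, ∑ b, F a b c from
    Finset.sum_congr rfl fun a _ => Finset.sum_comm]
  rw [Finset.sum_comm]
  exact Finset.sum_congr rfl fun c _ => Finset.sum_comm

lemma innerB {X Y2 : Type} [Fintype X] [Fintype Y2]
    (π : X → ℝ) (h : X → X → ℝ) (K : X → Y2 × X → ℝ) (G : Y2 → X → X → ℝ) :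
    ∑ y2, ∑ x, ∑ x', π x * (∑ x'', h x x'' * K x'' (y2, x')) * G y2 x x'
    = ∑ x, ∑ x'', π x * h x x'' * (∑ y2, ∑ x', K x'' (y2, x') * G y2 x x') := by
  simp only [Finset.mul_sum, Finset.sum_mul]
  rw [swap_aux (fun y2 x x' x'' => π x * (h x x'' * K x'' (y2, x')) * G y2 x x')]
  refine Finset.sum_congr rfl fun x _ => Finset.sum_congr rfl fun x'' _ =>
    Finset.sum_congr rfl fun y2 _ => Finset.sum_congr rfl fun x' _ => by ring

/-- Rewrite the vulnerability of a composition as a vulnerability of the first HMM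
with a lifted gain function indexed by strategies `Y2 → W`. -/
lemma vul_seq_left {W X Y1 Y2 : Type} [Fintype X] [Fintype Y1] [Fintype Y2]
    [DecidableEq Y2] [Nonempty Y2] [Fintype W] [Nonempty W]
    (g : W → X × X → ℝ) (π : X → ℝ) (H1 : X → Y1 × X → ℝ) (K : X → Y2 × X → ℝ) :
    vulPostH g π (seqComp H1 K)
      = vulPostH (fun (φ : Y2 → W) (p : X × X) =>
          ∑ y2, ∑ x', K p.2 (y2, x') * g (φ y2) (p.1, x')) π H1 := by
  unfold vulPostH seqComp
  rw [Fintype.sum_prod_type]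
  refine Finset.sum_congr rfl fun y1 _ => ?_
  rw [sum_sup'_eq_sup'_sum (fun y2 w => ∑ x, ∑ x',
      π x * (∑ x'', H1 x (y1, x'') * K x'' (y2, x')) * g w (x, x'))]
  refine Finset.sup'_congr _ rfl fun φ _ => ?_
  exact innerB π (fun x x'' => H1 x (y1, x'')) K (fun y2 x x' => g (φ y2) (x, x'))

lemma innerC {X : Type} [Fintype X] [Nonempty X]
    (π : X → ℝ) (h : X → X → ℝ) (k : X → X → ℝ) (G : X → X → ℝ) :
    ∑ x, ∑ x', π x * (∑ x'', h x x'' * k x'' x') * G x x'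
    = ∑ x'', ∑ x', (Fintype.card X : ℝ)⁻¹ * k x'' x'
        * ((Fintype.card X : ℝ) * ∑ x, π x * h x x'' * G x x') := by
  have hc : (Fintype.card X : ℝ) ≠ 0 := by
    exact_mod_cast Fintype.card_ne_zero
  have : ∀ x'' x', (Fintype.card X : ℝ)⁻¹ * k x'' x'
        * ((Fintype.card X : ℝ) * ∑ x, π x * h x x'' * G x x')
      = ∑ x, π x * h x x'' * k x'' x' * G x x' := by
    intro x'' x'
    have h1 : (Fintype.card X : ℝ)⁻¹ * k x'' x'
        * ((Fintype.card X : ℝ) * ∑ x, π x * h x x'' * G x x')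
        = k x'' x' * ∑ x, π x * h x x'' * G x x' := by
      field_simp
    rw [h1, Finset.mul_sum]
    exact Finset.sum_congr rfl fun x _ => by ring
  simp only [this]
  simp only [Finset.mul_sum, Finset.sum_mul]
  rw [swap3 (fun x x' x'' => π x * (h x x'' * k x'' x') * G x x')]
  refine Finset.sum_congr rfl fun x'' _ => Finset.sum_congr rfl fun x' _ =>
    Finset.sum_congr rfl fun x _ => by ring

/-- Rewrite the vulnerability of a composition as a sum (over first observations)
of vulnerabilities of the second HMM with uniform prior and adapted gains. -/
lemma vul_seq_right {W X Y1 Y2 : Type} [Fintype X] [Nonempty X] [Fintype Y1] [Fintype Y2]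
    [Fintype W] [Nonempty W]
    (g : W → X × X → ℝ) (π : X → ℝ) (H1 : X → Y1 × X → ℝ) (K : X → Y2 × X → ℝ) :
    vulPostH g π (seqComp H1 K)
      = ∑ y1, vulPostH (fun w (q : X × X) =>
            (Fintype.card X : ℝ) * ∑ x, π x * H1 x (y1, q.1) * g w (x, q.2))
          (fun _ => (Fintype.card X : ℝ)⁻¹) K := by
  unfold vulPostH seqComp
  rw [Fintype.sum_prod_type]
  refine Finset.sum_congr rfl fun y1 _ => ?_
  refine Finset.sum_congr rfl fun y2 _ => ?_
  refine Finset.sup'_congr _ rfl fun w _ => ?_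
  exact innerC π (fun x x'' => H1 x (y1, x'')) (fun x'' x' => K x'' (y2, x'))
    (fun x x' => g w (x, x'))

/-- sequential composition is monotone wrt secure refinement. -/
theorem seqComp_mono_refines {X Y1 Y2 : Type}
    [Fintype X] [Nonempty X] [Fintype Y1] [Nonempty Y1] [Fintype Y2] [Nonempty Y2]
    (H H' : X → Y1 × X → ℝ) (K K' : X → Y2 × X → ℝ)
    (hHpos : ∀ x p, 0 ≤ H x p) (hHsum : ∀ x, ∑ p : Y1 × X, H x p = 1)
    (hH'pos : ∀ x p, 0 ≤ H' x p) (hH'sum : ∀ x, ∑ p : Y1 × X, H' x p = 1)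
    (hKpos : ∀ x p, 0 ≤ K x p) (hKsum : ∀ x, ∑ p : Y2 × X, K x p = 1)
    (hK'pos : ∀ x p, 0 ≤ K' x p) (hK'sum : ∀ x, ∑ p : Y2 × X, K' x p = 1)
    (hHH' : Refines H H') (hKK' : Refines K K') :
    Refines (seqComp H K) (seqComp H' K') := by
  classical
  intro W _ _ g hg π hπ hπ1
  have hc : (Fintype.card X : ℝ) ≠ 0 := by exact_mod_cast Fintype.card_ne_zero
  -- step 1: H ⊑ H'
  have step1 : vulPostH g π (seqComp H K) ≥ vulPostH g π (seqComp H' K) := by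
    rw [vul_seq_left g π H K, vul_seq_left g π H' K]
    exact hHH' (Y2 → W)
      (fun φ p => ∑ y2, ∑ x', K p.2 (y2, x') * g (φ y2) (p.1, x'))
      (fun φ p => Finset.sum_nonneg fun y2 _ => Finset.sum_nonneg fun x' _ =>
        mul_nonneg (hKpos _ _) (hg _ _))
      π hπ hπ1
  -- step 2: K ⊑ K'
  have step2 : vulPostH g π (seqComp H' K) ≥ vulPostH g π (seqComp H' K') := by
    rw [vul_seq_right g π H' K, vul_seq_right g π H' K']
    refine Finset.sum_le_sum fun y1 _ => ?_
    refine hKK' W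
      (fun w q => (Fintype.card X : ℝ) * ∑ x, π x * H' x (y1, q.1) * g w (x, q.2))
      (fun w q => mul_nonneg (by positivity)
        (Finset.sum_nonneg fun x _ => mul_nonneg (mul_nonneg (hπ x) (hH'pos _ _)) (hg _ _)))
      (fun _ => (Fintype.card X : ℝ)⁻¹)
      (fun _ => by positivity)
      ?_
    rw [Finset.sum_const, Finset.card_univ, nsmul_eq_mul, mul_inv_cancel₀ hc]
  exact le_trans step2 step1
end

section
/- Let H : X → (Y × X) → ℝ be an HMM, π a prior on X, and g : W → (X × X) → ℝ a nonnegative gain function. Define the transformed gain function g^H : (Y → W) → (X × X) → ℝ on strategies σ : Y → W by g^H σ (x,x') = Σ_{y,u} g (σ y) (x,u) * H x' (y,u). Then the posterior vulnerability of H equals the strategy-maximised prior value of g^H on the diagonal: V_g[π▷H] = max_{σ : Y → W} Σ_x π x * g^H σ (x,x). -/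
open Finset

/-- The transformed gain function `g^H` on strategies:
`g^H σ (x,x') = Σ_{y,u} g (σ y) (x,u) * H x' (y,u)`. -/
noncomputable def gtrans {X Y V : Type} [Fintype X] [Fintype Y]
    (H : X → Y × X → ℝ) (g : V → X × X → ℝ) : (Y → V) → X × X → ℝ :=
  fun σ p => ∑ y, ∑ u, g (σ y) (p.1, u) * H p.2 (y, u)

lemma sum_sup'_eq_sup'_strategy {Y W : Type} [Fintype Y] [DecidableEq Y] [Fintype W] [Nonempty W]
    (f : Y → W → ℝ) :
    ∑ y, Finset.univ.sup' Finset.univ_nonempty (f y) =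
      Finset.univ.sup' Finset.univ_nonempty (fun σ : Y → W => ∑ y, f y (σ y)) := by
  apply le_antisymm
  · have h : ∀ y : Y, ∃ w : W, Finset.univ.sup' Finset.univ_nonempty (f y) = f y w := by
      intro y
      obtain ⟨w, _, hw⟩ := Finset.exists_mem_eq_sup' Finset.univ_nonempty (f y)
      exact ⟨w, hw⟩
    choose σ hσ using h
    calc ∑ y, Finset.univ.sup' Finset.univ_nonempty (f y) = ∑ y, f y (σ y) := by
          exact Finset.sum_congr rfl fun y _ => hσ y
      _ ≤ _ := Finset.le_sup' (fun σ : Y → W => ∑ y, f y (σ y)) (Finset.mem_univ σ)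
  · apply Finset.sup'_le
    intro σ _
    exact Finset.sum_le_sum fun y _ =>
      Finset.le_sup' (f y) (Finset.mem_univ (σ y))

/-- `V_g[π▷H]` equals the strategy-maximised prior value of `g^H`
on the diagonal. -/
theorem vulPostH_eq_gtrans_diag {X Y W : Type}
    [Fintype X] [Nonempty X] [Fintype Y] [Nonempty Y] [DecidableEq Y]
    [Fintype W] [Nonempty W]
    (H : X → Y × X → ℝ) (hHpos : ∀ x p, 0 ≤ H x p) (hHsum : ∀ x, ∑ p : Y × X, H x p = 1)
    (π : X → ℝ) (hπpos : ∀ x, 0 ≤ π x) (hπsum : ∑ x, π x = 1)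
    (g : W → X × X → ℝ) (hgpos : ∀ w p, 0 ≤ g w p) :
    vulPostH g π H =
      Finset.univ.sup' Finset.univ_nonempty
        (fun σ : Y → W => ∑ x, π x * gtrans H g σ (x, x)) := by
  rw [vulPostH,
    sum_sup'_eq_sup'_strategy (fun y w => ∑ x, ∑ x', π x * H x (y, x') * g w (x, x'))]
  apply Finset.sup'_congr _ rfl
  intro σ _
  simp only [gtrans, Finset.mul_sum]
  rw [Finset.sum_comm]
  congr 1
  ext x
  congr 1
  ext y
  congr 1
  ext u
  ring
end

section
/- Let H1 : X → (Y1 × X) → ℝ and H2 : X → (Y2 × X) → ℝ be HMMs, π a prior on X, and y1 ∈ Y1, y2 ∈ Y2. Let N1 = Σ_{x,u} π x * H1 x (y1,u) and assume N1 > 0; define the right marginal of the y1-posterior by γ→ u = Σ_x π x * H1 x (y1,u) / N1, and let N2 = Σ_{u,x'} γ→ u * H2 u (y2,x'). Then the normalisation constant of the composed HMM factorises: Σ_{x,x'} π x * (H1;H2) x ((y1,y2),x') = N1 * N2. -/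
open Finset

/-- the normalisation constant of the composed HMM factorises:
`Σ_{x,x'} π x * (H1;H2) x ((y1,y2),x') = N1 * N2`. -/
theorem seqComp_normalisation_factorises {X Y1 Y2 : Type}
    [Fintype X] [Nonempty X] [Fintype Y1] [Nonempty Y1] [Fintype Y2] [Nonempty Y2]
    (H1 : X → Y1 × X → ℝ) (H2 : X → Y2 × X → ℝ)
    (h1pos : ∀ x p, 0 ≤ H1 x p) (h1sum : ∀ x, ∑ p : Y1 × X, H1 x p = 1)
    (h2pos : ∀ x p, 0 ≤ H2 x p) (h2sum : ∀ x, ∑ p : Y2 × X, H2 x p = 1)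
    (π : X → ℝ) (hπpos : ∀ x, 0 ≤ π x) (hπsum : ∑ x, π x = 1)
    (y1 : Y1) (y2 : Y2)
    (N1 : ℝ) (hN1 : N1 = ∑ x, ∑ u, π x * H1 x (y1, u)) (hN1pos : 0 < N1)
    (γr : X → ℝ) (hγr : ∀ u, γr u = (∑ x, π x * H1 x (y1, u)) / N1)
    (N2 : ℝ) (hN2 : N2 = ∑ u, ∑ x', γr u * H2 u (y2, x')) :
    ∑ x, ∑ x', π x * seqComp H1 H2 x ((y1, y2), x') = N1 * N2 := by
  have lhs : ∑ x, ∑ x', π x * seqComp H1 H2 x ((y1, y2), x')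
      = ∑ u, ∑ x', (∑ x, π x * H1 x (y1, u)) * H2 u (y2, x') := by
    simp only [seqComp, Finset.mul_sum]
    rw [Finset.sum_comm]
    conv_rhs => rw [Finset.sum_comm]
    refine Finset.sum_congr rfl fun x' _ => ?_
    rw [Finset.sum_comm]
    refine Finset.sum_congr rfl fun u _ => ?_
    rw [Finset.sum_mul]
    exact Finset.sum_congr rfl fun x _ => by ring
  rw [lhs, hN2, Finset.mul_sum]
  refine Finset.sum_congr rfl fun u _ => ?_
  rw [Finset.mul_sum]
  refine Finset.sum_congr rfl fun x' _ => ?_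
  rw [hγr, div_mul_eq_mul_div, mul_div_assoc', mul_comm N1, mul_div_assoc,
    div_self hN1pos.ne', mul_one]
end

section
/- Let H1 : X → (Y1 × X) → ℝ and H2 : X → (Y2 × X) → ℝ be HMMs, π a prior on X, and y1 ∈ Y1, y2 ∈ Y2. Let N1 = Σ_{x,u} π x * H1 x (y1,u) > 0; let γ (x,u) = π x * H1 x (y1,u) / N1 be the y1-posterior of H1, with right marginal γ→ u = Σ_x γ (x,u); and let N2 = Σ_{u,x'} γ→ u * H2 u (y2,x') > 0. Then the (y1,y2)-posterior of H1;H2 factorises through the posteriors of the components: for all x, x' ∈ X, π x * (H1;H2) x ((y1,y2),x') / (N1 * N2) = Σ_u γ (x,u) * H2 u (y2,x') / N2. -/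
open Finset

/-- the `(y1,y2)`-posterior of `H1;H2` factorises through the
posteriors of the components. -/
theorem seqComp_posterior_factorises {X Y1 Y2 : Type}
    [Fintype X] [Nonempty X] [Fintype Y1] [Nonempty Y1] [Fintype Y2] [Nonempty Y2]
    (H1 : X → Y1 × X → ℝ) (H2 : X → Y2 × X → ℝ)
    (h1pos : ∀ x p, 0 ≤ H1 x p) (h1sum : ∀ x, ∑ p : Y1 × X, H1 x p = 1)
    (h2pos : ∀ x p, 0 ≤ H2 x p) (h2sum : ∀ x, ∑ p : Y2 × X, H2 x p = 1)
    (π : X → ℝ) (hπpos : ∀ x, 0 ≤ π x) (hπsum : ∑ x, π x = 1)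
    (y1 : Y1) (y2 : Y2)
    (N1 : ℝ) (hN1 : N1 = ∑ x, ∑ u, π x * H1 x (y1, u)) (hN1pos : 0 < N1)
    (γ : X × X → ℝ) (hγ : ∀ x u, γ (x, u) = π x * H1 x (y1, u) / N1)
    (γr : X → ℝ) (hγr : ∀ u, γr u = ∑ x, γ (x, u))
    (N2 : ℝ) (hN2 : N2 = ∑ u, ∑ x', γr u * H2 u (y2, x')) (hN2pos : 0 < N2) :
    ∀ x x' : X,
      π x * seqComp H1 H2 x ((y1, y2), x') / (N1 * N2) =
        (∑ u, γ (x, u) * H2 u (y2, x')) / N2 := by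
  intro x x'
  simp only [seqComp, hγ, Finset.mul_sum]
  rw [eq_div_iff hN2pos.ne', div_mul_eq_mul_div, div_eq_iff (by positivity : N1 * N2 ≠ 0),
    Finset.sum_mul, Finset.sum_mul]
  apply Finset.sum_congr rfl
  intro u _
  field_simp
end
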